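/- For the generalized Pólya urn sequence of the previous context, the probability that I₁ = ... = I_n = 1 equals ∏_{k=0}^{n-1} (1-α+αk)/(θ+1+αk), and for 0 < α this equals the probability that Beta((1-α)/α, (θ+α)/α)-many i.i.d. Bernoulli trials all succeed, i.e. E[Bⁿ] for B ~ Beta((1-α)/α, (θ+α)/α). -/

import Mathlib

open MeasureTheory ProbabilityTheory Filter Finset

/-! Along the all-ones path the urn's transition probabilities are `(1-α+αk)/(θ+1+αk)`.
The density defining `urnBetaMeasure a b` is the beta density, and `xⁿ` times it is
`B(a+n,b)/B(a,b)` times the `Beta(a+n,b)` density, so the `n`-th moment is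
`B(a+n,b)/B(a,b) = ∏_{k<n} (a+k)/(a+b+k)` by `Γ(s+1) = sΓ(s)`. For `a = (1-α)/α`,
`b = (θ+α)/α` these factors are exactly the urn's. -/

noncomputable def urnBetaMeasure (a b : ℝ) : Measure ℝ :=
  MeasureTheory.volume.withDensity fun x => ENNReal.ofReal
    (Set.indicator (Set.Ioo 0 1)
      (fun y => (Real.Gamma (a + b) / (Real.Gamma a * Real.Gamma b)) *
        y ^ (a - 1) * (1 - y) ^ (b - 1)) x)


/-- Transition probability of the generalized Pólya urn (7) (with `i = 0`): the
probability that `I_{j+1} = ε j` given `I₁ = ε 0, ..., I_j = ε (j-1)`. -/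
noncomputable def urnStep (α θ : ℝ) (ε : ℕ → Bool) (j : ℕ) : ℝ :=
  let s : ℕ := ((Finset.range j).filter (fun i => ε i = true)).card
  if ε j then (1 - α + α * s) / (θ + 1 + α * j)
  else (θ + α + α * ((j : ℝ) - s)) / (θ + 1 + α * j)

lemma urnStep_const_true (α θ : ℝ) (j : ℕ) :
    urnStep α θ (fun _ => true) j = (1 - α + α * j) / (θ + 1 + α * j) := by
  simp [urnStep]

lemma urnBetaMeasure_eq_betaMeasure (a b : ℝ) : urnBetaMeasure a b = betaMeasure a b := by
  unfold urnBetaMeasure betaMeasure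
  congr with x
  simp only [betaPDF, betaPDFReal, Set.indicator, Set.mem_Ioo, beta, one_div_div]

namespace ProbabilityTheory

variable {u v : ℝ}

lemma beta_add_one_left (hu : u ≠ 0) (huv : u + v ≠ 0) :
    beta (u + 1) v = u / (u + v) * beta u v := by
  rw [beta, beta, add_right_comm, Real.Gamma_add_one hu, Real.Gamma_add_one huv]
  field_simp

lemma beta_add_nat_left (hu : 0 < u) (hv : 0 < v) (n : ℕ) :
    beta (u + n) v = (∏ k ∈ range n, (u + k) / (u + v + k)) * beta u v := by
  induction n with
  | zero => simp
  | succ n ih =>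
    rw [Nat.cast_succ, ← add_assoc, beta_add_one_left (by positivity) (by positivity), ih,
      prod_range_succ, add_right_comm u n v]
    ring

lemma betaPDFReal_nonneg (hu : 0 < u) (hv : 0 < v) (x : ℝ) : 0 ≤ betaPDFReal u v x := by
  unfold betaPDFReal
  split_ifs with hx
  · exact (betaPDFReal_pos hx.1 hx.2 hu hv).le.trans_eq (if_pos hx)
  · exact le_rfl

lemma integral_betaPDFReal (hu : 0 < u) (hv : 0 < v) : ∫ x, betaPDFReal u v x = 1 := by
  rw [integral_eq_lintegral_of_nonneg_ae (.of_forall (betaPDFReal_nonneg hu hv))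
    (measurable_betaPDFReal u v).aestronglyMeasurable]
  simpa [betaPDF] using congrArg ENNReal.toReal (lintegral_betaPDF_eq_one hu hv)

lemma betaPDFReal_mul_pow (hu : 0 < u) (hv : 0 < v) (n : ℕ) (x : ℝ) :
    betaPDFReal u v x * x ^ n = beta (u + n) v / beta u v * betaPDFReal (u + n) v x := by
  have hβ := (beta_pos (α := u + n) (by positivity) hv).ne'
  unfold betaPDFReal
  split_ifs with hx
  · rw [add_sub_right_comm, Real.rpow_add hx.1, Real.rpow_natCast]
    field_simp
  · simp

lemma integral_pow_betaMeasure (hu : 0 < u) (hv : 0 < v) (n : ℕ) :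
    ∫ x, x ^ n ∂betaMeasure u v = ∏ k ∈ range n, (u + k) / (u + v + k) := by
  have hβ := (beta_pos hu hv).ne'
  rw [betaMeasure, integral_withDensity_eq_integral_toReal_smul (f := betaPDF u v)
    (measurable_betaPDFReal u v).ennreal_ofReal (.of_forall fun _ => ENNReal.ofReal_lt_top)]
  simp only [betaPDF, ENNReal.toReal_ofReal (betaPDFReal_nonneg hu hv _), smul_eq_mul,
    betaPDFReal_mul_pow hu hv, integral_const_mul,
    integral_betaPDFReal (by positivity : 0 < u + n) hv, beta_add_nat_left hu hv]
  field_simp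

end ProbabilityTheory

lemma urn_beta_parameters {α θ : ℝ} (hα : α ≠ 0) (k : ℕ) :
    ((1 - α) / α + k) / ((1 - α) / α + (θ + α) / α + k) =
      (1 - α + α * k) / (θ + 1 + α * k) := by
  field_simp
  ring_nf

theorem stmt12_general {Ω : Type*} [MeasurableSpace Ω] (P : Measure Ω)
    (α θ : ℝ) (hα : 0 < α) (hα1 : α < 1) (hθ : θ > -α)
    (I : ℕ → Ω → Bool)
    (hurn : ∀ (n : ℕ) (ε : ℕ → Bool),
      P {ω | ∀ j < n, I j ω = ε j} =
        ENNReal.ofReal (∏ j ∈ Finset.range n, urnStep α θ ε j)) :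
    ∀ n : ℕ,
      P {ω | ∀ j < n, I j ω = true} =
        ENNReal.ofReal (∏ k ∈ Finset.range n, (1 - α + α * k) / (θ + 1 + α * k)) ∧
      (∏ k ∈ Finset.range n, (1 - α + α * k) / (θ + 1 + α * k)) =
        ∫ x, x ^ n ∂(urnBetaMeasure ((1 - α) / α) ((θ + α) / α)) := by
  intro n
  refine ⟨by simp only [hurn n fun _ => true, urnStep_const_true], ?_⟩
  have ha : 0 < (1 - α) / α := div_pos (by linarith) hα
  have hb : 0 < (θ + α) / α := div_pos (by linarith) hα
  simp only [urnBetaMeasure_eq_betaMeasure, integral_pow_betaMeasure ha hb,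
    urn_beta_parameters hα.ne']

/-- For the generalized Pólya urn, `P(I₁ = ⋯ = I_n = 1) = ∏_{k=0}^{n-1} (1-α+αk)/(θ+1+αk)`,
and this equals the `n`-th moment `E[Bⁿ]` of `B ~ Beta((1-α)/α, (θ+α)/α)`. -/
theorem stmt12 {Ω : Type*} [MeasurableSpace Ω] (P : Measure Ω) [IsProbabilityMeasure P]
    (α θ : ℝ) (hα : 0 < α) (hα1 : α < 1) (hθ : θ > -α)
    (I : ℕ → Ω → Bool) (hIm : ∀ i, Measurable (I i))
    (hurn : ∀ (n : ℕ) (ε : ℕ → Bool),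
      P {ω | ∀ j < n, I j ω = ε j} =
        ENNReal.ofReal (∏ j ∈ Finset.range n, urnStep α θ ε j)) :
    ∀ n : ℕ,
      P {ω | ∀ j < n, I j ω = true} =
        ENNReal.ofReal (∏ k ∈ Finset.range n, (1 - α + α * k) / (θ + 1 + α * k)) ∧
      (∏ k ∈ Finset.range n, (1 - α + α * k) / (θ + 1 + α * k)) =
        ∫ x, x ^ n ∂(urnBetaMeasure ((1 - α) / α) ((θ + α) / α)) :=
  stmt12_general P α θ hα hα1 hθ I hurn
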